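/- Fix t > 0 and distinct reals μ_1,...,μ_N. Define on the Gelfand–Tsetlin cone GT_N the function p̃_t(x) = det[Ψ̃_{N-k}^{N,t}(x_ℓ^N)]_{1≤k,ℓ≤N} · ∏_{k=1}^N e^{−tμ_k²/2} · ∏_{n=1}^{N-1} ∏_{k=1}^{n} e^{(μ_n − μ_{n+1}) x_k^n}, where Ψ̃_{N-k}^{N,t}(x) = e^{μ_N x} Ψ_{N-k}^{N,t}(x) and each Ψ̃_{N-k}^{N,t} satisfies (1/2)∂²_x Ψ̃ = ∂_t Ψ̃ + μ_N ∂_x Ψ̃ − (μ_N²/2) Ψ̃. Then p̃_t satisfies the Fokker–Planck equation ∂_t p̃_t(x) = Σ_{n=1}^{N} Σ_{k=1}^{n} ( (1/2) ∂²/∂(x_k^n)² − μ_n ∂/∂x_k^n ) p̃_t(x) in the interior of GT_N. -/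

import Mathlib

open Finset

lemma sum_pt_update (A : Finset ℕ) (B : ℕ → Finset ℕ) (f g : ℕ → ℕ → ℝ) (n k : ℕ)
    (hn : n ∈ A) (hk : k ∈ B n) (h : ∀ m j, m ≠ n ∨ j ≠ k → g m j = f m j) :
    ∑ m ∈ A, ∑ j ∈ B m, g m j = (∑ m ∈ A, ∑ j ∈ B m, f m j) + (g n k - f n k) := by
  rw [← Finset.add_sum_erase _ (fun m => ∑ j ∈ B m, g m j) hn,
    ← Finset.add_sum_erase _ (fun m => ∑ j ∈ B m, f m j) hn]
  have h1 : ∑ j ∈ B n, g n j = ∑ j ∈ B n, f n j + (g n k - f n k) := by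
    rw [← Finset.add_sum_erase _ (fun j => g n j) hk,
      ← Finset.add_sum_erase _ (fun j => f n j) hk]
    have h3 : ∑ j ∈ (B n).erase k, g n j = ∑ j ∈ (B n).erase k, f n j :=
      Finset.sum_congr rfl fun j hj => h n j (Or.inr (Finset.ne_of_mem_erase hj))
    rw [h3]; ring
  have h2 : ∑ m ∈ A.erase n, ∑ j ∈ B m, g m j = ∑ m ∈ A.erase n, ∑ j ∈ B m, f m j :=
    Finset.sum_congr rfl fun m hm =>
      Finset.sum_congr rfl fun j _ => h m j (Or.inl (Finset.ne_of_mem_erase hm))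
  rw [h1, h2]; ring

lemma abel_lemma (f : ℕ → ℝ) : ∀ N : ℕ, 1 ≤ N →
    ∑ n ∈ Finset.Icc 1 (N - 1), (n : ℝ) * (f (n + 1) - f n)
      = N * f N - ∑ k ∈ Finset.Icc 1 N, f k := by
  intro N
  induction N with
  | zero => intro h; omega
  | succ M ih =>
    intro _
    rcases Nat.eq_zero_or_pos M with hM | hM
    · subst hM; simp
    · have hM1 : M - 1 + 1 = M := by omega
      have e1 : ∑ n ∈ Finset.Icc 1 M, (n : ℝ) * (f (n + 1) - f n)
          = (∑ n ∈ Finset.Icc 1 (M - 1), (n : ℝ) * (f (n + 1) - f n))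
            + (M : ℝ) * (f (M + 1) - f M) := by
        rw [← hM1, Finset.sum_Icc_succ_top (by omega)]
        simp [hM1]
      have e2 : ∑ k ∈ Finset.Icc 1 (M + 1), f k = (∑ k ∈ Finset.Icc 1 M, f k) + f (M + 1) :=
        Finset.sum_Icc_succ_top (by omega) f
      have := ih hM
      simp only [Nat.add_sub_cancel]
      rw [e1, e2, this]
      push_cast
      ring

lemma sum_Icc_one_eq_sum_fin (N : ℕ) (f : ℕ → ℝ) :
    ∑ k ∈ Finset.Icc 1 N, f k = ∑ i : Fin N, f (i.1 + 1) := by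
  refine Finset.sum_bij' (fun k hk => (⟨k - 1, by simp [Finset.mem_Icc] at hk; omega⟩ : Fin N))
    (fun i _ => i.1 + 1) ?_ ?_ ?_ ?_ ?_
  · intro a ha; exact Finset.mem_univ _
  · intro i _; simp [Finset.mem_Icc]
  · intro a ha; simp only [Finset.mem_Icc] at ha; show a - 1 + 1 = a; omega
  · intro i _; simp
  · intro a ha; simp only [Finset.mem_Icc] at ha; congr 1; show a = a - 1 + 1; omega


/-- Update the single Gelfand–Tsetlin coordinate `x_k^n` (coordinate `(n,k)`) to `s`. -/
noncomputable def upd (x : ℕ → ℕ → ℝ) (n k : ℕ) (s : ℝ) : ℕ → ℕ → ℝ :=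
  fun m j => if m = n ∧ j = k then s else x m j

/-- The density
`p̃_t(x) = det[Ψ̃_k(t, x_ℓ^N)]_{1≤k,ℓ≤N} ∏_{k=1}^N e^{−tμ_k²/2}
  ∏_{n=1}^{N-1}∏_{k=1}^{n} e^{(μ_n − μ_{n+1}) x_k^n}`. -/
noncomputable def ptil (N : ℕ) (μ : ℕ → ℝ) (Ψ : Fin N → ℝ → ℝ → ℝ)
    (t : ℝ) (x : ℕ → ℕ → ℝ) : ℝ :=
  Matrix.det (Matrix.of fun k ℓ : Fin N => Ψ k t (x N (ℓ.1 + 1)))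
    * (∏ k ∈ Finset.Icc 1 N, Real.exp (-t * μ k ^ 2 / 2))
    * ∏ n ∈ Finset.Icc 1 (N - 1), ∏ k ∈ Finset.Icc 1 n, Real.exp ((μ n - μ (n + 1)) * x n k)

noncomputable def Aexp (μ : ℕ → ℝ) (N : ℕ) : ℝ := ∑ k ∈ Finset.Icc 1 N, (-(μ k ^ 2) / 2)

noncomputable def SS (μ : ℕ → ℝ) (N : ℕ) (y : ℕ → ℕ → ℝ) : ℝ :=
  ∑ n ∈ Finset.Icc 1 (N - 1), ∑ k ∈ Finset.Icc 1 n, (μ n - μ (n + 1)) * y n k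

noncomputable def Gd (N : ℕ) (Ψ : Fin N → ℝ → ℝ → ℝ) (s : ℝ) (w : Fin N → ℝ) : ℝ :=
  ∑ σ : Equiv.Perm (Fin N), ((Equiv.Perm.sign σ : ℤ) : ℝ) * ∏ i, Ψ (σ i) s (w i)

lemma ptil_eq (N : ℕ) (μ : ℕ → ℝ) (Ψ : Fin N → ℝ → ℝ → ℝ) (s : ℝ) (y : ℕ → ℕ → ℝ) :
    ptil N μ Ψ s y = Gd N Ψ s (fun i => y N (i.1 + 1)) * Real.exp (s * Aexp μ N + SS μ N y) := by
  have e1 : ∏ k ∈ Finset.Icc 1 N, Real.exp (-s * μ k ^ 2 / 2) = Real.exp (s * Aexp μ N) := by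
    unfold Aexp
    rw [Finset.mul_sum, Real.exp_sum]
    exact Finset.prod_congr rfl fun k _ => by
      rw [show s * (-(μ k ^ 2) / 2) = -s * μ k ^ 2 / 2 from by ring]
  have e2 : ∏ n ∈ Finset.Icc 1 (N - 1), ∏ k ∈ Finset.Icc 1 n,
      Real.exp ((μ n - μ (n + 1)) * y n k) = Real.exp (SS μ N y) := by
    unfold SS
    rw [Real.exp_sum]
    exact Finset.prod_congr rfl fun n _ => (Real.exp_sum _ _).symm
  unfold ptil Gd
  rw [Matrix.det_apply', e1, e2, Real.exp_add, mul_assoc]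
  rfl

/-- if each `Ψ̃_k` is smooth and satisfies the heat-type equation
`(1/2)∂²_x Ψ̃ = ∂_t Ψ̃ + μ_N ∂_x Ψ̃ − (μ_N²/2) Ψ̃`, then `p̃` satisfies the Fokker–Planck
equation `∂_t p̃ = Σ_{n=1}^{N} Σ_{k=1}^{n} ((1/2) ∂²_{x_k^n} − μ_n ∂_{x_k^n}) p̃`
in the interior of the Gelfand–Tsetlin cone. -/
theorem stmt17 (N : ℕ) (hN : 1 ≤ N) (μ : ℕ → ℝ) (hdist : Set.InjOn μ (Set.Icc 1 N))
    (Ψ : Fin N → ℝ → ℝ → ℝ)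
    (hsmooth : ∀ k, ContDiff ℝ (⊤ : ℕ∞) (fun p : ℝ × ℝ => Ψ k p.1 p.2))
    (hPDE : ∀ k (s u : ℝ),
      (1 / 2) * deriv (deriv (fun v => Ψ k s v)) u
        = deriv (fun v => Ψ k v u) s + μ N * deriv (fun v => Ψ k s v) u
          - μ N ^ 2 / 2 * Ψ k s u)
    (t : ℝ) (ht : 0 < t) (x : ℕ → ℕ → ℝ)
    (hint : ∀ n ∈ Finset.Icc 1 (N - 1), ∀ k ∈ Finset.Icc 1 n,
      x (n + 1) k < x n k ∧ x n k < x (n + 1) (k + 1)) :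
    deriv (fun s => ptil N μ Ψ s x) t
      = ∑ n ∈ Finset.Icc 1 N, ∑ k ∈ Finset.Icc 1 n,
          ((1 / 2) * deriv (deriv (fun u => ptil N μ Ψ t (upd x n k u))) (x n k)
            - μ n * deriv (fun u => ptil N μ Ψ t (upd x n k u)) (x n k)) := by
  classical
  have hNpos : 0 < N := hN
  set v : Fin N → ℝ := fun i => x N (i.1 + 1) with hv
  set X : ℝ := Real.exp (t * Aexp μ N + SS μ N x) with hX
  -- differentiability facts
  have hdiff2 : ∀ (k : Fin N) (s : ℝ), ContDiff ℝ (⊤ : ℕ∞) (fun u => Ψ k s u) := fun k s =>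
    ((hsmooth k).of_le (by simp)).comp (contDiff_const.prodMk contDiff_id)
  have hdiffu : ∀ (k : Fin N) (s : ℝ), Differentiable ℝ (fun u => Ψ k s u) := fun k s =>
    (hdiff2 k s).differentiable (by simp)
  have hdiffs : ∀ (k : Fin N) (u : ℝ), Differentiable ℝ (fun s => Ψ k s u) := fun k u =>
    (((hsmooth k).of_le (by simp)).comp
      (contDiff_id.prodMk contDiff_const) : ContDiff ℝ (⊤ : ℕ∞) _).differentiable
      (by simp)
  have hdiffd1 : ∀ (k : Fin N) (s : ℝ), Differentiable ℝ (deriv (fun u => Ψ k s u)) :=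
    fun k s => (contDiff_infty_iff_deriv.mp (hdiff2 k s)).2.differentiable (by simp)
  -- the t-derivative of Gd
  set dG : ℝ := ∑ σ : Equiv.Perm (Fin N), ((Equiv.Perm.sign σ : ℤ) : ℝ) *
      ∑ i : Fin N, (∏ j ∈ Finset.univ.erase i, Ψ (σ j) t (v j)) *
        deriv (fun s => Ψ (σ i) s (v i)) t with hdG
  have hGt : HasDerivAt (fun s => Gd N Ψ s v) dG t := by
    rw [hdG]
    show HasDerivAt (fun s => ∑ σ : Equiv.Perm (Fin N),
      ((Equiv.Perm.sign σ : ℤ) : ℝ) * ∏ i, Ψ (σ i) s (v i)) _ t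
    refine HasDerivAt.fun_sum fun σ _ => ?_
    have hp : HasDerivAt (fun s => ∏ i : Fin N, Ψ (σ i) s (v i))
        (∑ i : Fin N, (∏ j ∈ Finset.univ.erase i, Ψ (σ j) t (v j)) •
          deriv (fun s => Ψ (σ i) s (v i)) t) t :=
      HasDerivAt.fun_finsetProd fun i _ => (hdiffs (σ i) (v i) t).hasDerivAt
    simpa [smul_eq_mul] using hp.const_mul (((Equiv.Perm.sign σ : ℤ) : ℝ))
  -- LHS
  have hL : deriv (fun s => ptil N μ Ψ s x) t = (dG + Aexp μ N * Gd N Ψ t v) * X := by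
    have hfun : (fun s => ptil N μ Ψ s x)
        = fun s => Gd N Ψ s v * Real.exp (s * Aexp μ N + SS μ N x) := by
      funext s; rw [ptil_eq, hv]
    rw [hfun]
    have h0 : HasDerivAt (fun s : ℝ => s * Aexp μ N + SS μ N x) (Aexp μ N) t := by
      simpa using ((hasDerivAt_id t).mul_const (Aexp μ N)).add_const (SS μ N x)
    have hE : HasDerivAt (fun s => Real.exp (s * Aexp μ N + SS μ N x))
        (Real.exp (t * Aexp μ N + SS μ N x) * Aexp μ N) t :=
      (Real.hasDerivAt_exp _).comp t h0
    have hd : deriv (fun s => Gd N Ψ s v * Real.exp (s * Aexp μ N + SS μ N x)) t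
        = dG * Real.exp (t * Aexp μ N + SS μ N x)
          + Gd N Ψ t v * (Real.exp (t * Aexp μ N + SS μ N x) * Aexp μ N) :=
      (hGt.mul hE).deriv
    rw [hd, hX]; ring
  -- Case A : n ≤ N - 1
  have hcase1 : ∀ n ∈ Finset.Icc 1 (N - 1), ∀ k ∈ Finset.Icc 1 n,
      (1 / 2) * deriv (deriv (fun u => ptil N μ Ψ t (upd x n k u))) (x n k)
        - μ n * deriv (fun u => ptil N μ Ψ t (upd x n k u)) (x n k)
      = ((1 / 2) * (μ n - μ (n + 1)) ^ 2 - μ n * (μ n - μ (n + 1))) * (Gd N Ψ t v * X) := by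
    intro n hn k hk
    obtain ⟨hn1, hn2⟩ := Finset.mem_Icc.mp hn
    have hnN : n ≠ N := by omega
    set c : ℝ := μ n - μ (n + 1) with hcdef
    set K : ℝ := Gd N Ψ t v * Real.exp (t * Aexp μ N + SS μ N x - c * x n k) with hK
    have key : ∀ u, ptil N μ Ψ t (upd x n k u) = K * Real.exp (c * u) := by
      intro u
      rw [ptil_eq]
      have hv' : (fun i : Fin N => upd x n k u N (i.1 + 1)) = v := by
        funext i
        rw [hv]
        show (if N = n ∧ i.1 + 1 = k then u else x N (i.1 + 1)) = x N (i.1 + 1)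
        rw [if_neg]
        rintro ⟨h1, -⟩; exact hnN h1.symm
      have hS' : SS μ N (upd x n k u) = SS μ N x + (c * u - c * x n k) := by
        unfold SS
        have hupd : ∀ m j, m ≠ n ∨ j ≠ k →
            (μ m - μ (m + 1)) * upd x n k u m j = (μ m - μ (m + 1)) * x m j := by
          intro m j hmj
          congr 1
          show (if m = n ∧ j = k then u else x m j) = x m j
          rw [if_neg]
          rintro ⟨h1, h2⟩
          rcases hmj with h | h
          exacts [h h1, h h2]
        rw [sum_pt_update (Finset.Icc 1 (N - 1)) (fun m => Finset.Icc 1 m)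
          (fun m j => (μ m - μ (m + 1)) * x m j)
          (fun m j => (μ m - μ (m + 1)) * upd x n k u m j) n k hn hk hupd]
        have hu : upd x n k u n k = u := by simp [upd]
        rw [hu]
      rw [hv', hS', hK,
        show t * Aexp μ N + (SS μ N x + (c * u - c * x n k))
          = (t * Aexp μ N + SS μ N x - c * x n k) + c * u from by ring, Real.exp_add]
      ring
    have hPx : K * Real.exp (c * x n k) = Gd N Ψ t v * X := by
      rw [hX, hK, mul_assoc, ← Real.exp_add,
        show t * Aexp μ N + SS μ N x - c * x n k + c * x n k
          = t * Aexp μ N + SS μ N x from by ring]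
    have hder1A : deriv (fun u => ptil N μ Ψ t (upd x n k u))
        = fun u => K * c * Real.exp (c * u) := by
      funext u
      have h0 : HasDerivAt (fun y : ℝ => c * y) c u := by
        simpa using (hasDerivAt_id u).const_mul c
      have h1 : HasDerivAt (fun y => Real.exp (c * y)) (Real.exp (c * u) * c) u :=
        (Real.hasDerivAt_exp _).comp u h0
      have h2 : HasDerivAt (fun y => K * Real.exp (c * y)) (K * (Real.exp (c * u) * c)) u :=
        h1.const_mul K
      have h3 : HasDerivAt (fun y => K * Real.exp (c * y)) (K * c * Real.exp (c * u)) u := by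
        convert h2 using 1; ring
      have h4 : HasDerivAt (fun u' => ptil N μ Ψ t (upd x n k u')) (K * c * Real.exp (c * u)) u := by
        rw [funext key]; exact h3
      exact h4.deriv
    have hval1 : deriv (fun u => ptil N μ Ψ t (upd x n k u)) (x n k)
        = K * c * Real.exp (c * x n k) := by rw [hder1A]
    have hval2 : deriv (deriv (fun u => ptil N μ Ψ t (upd x n k u))) (x n k)
        = K * c * c * Real.exp (c * x n k) := by
      rw [hder1A]
      refine HasDerivAt.deriv ?_
      have h0 : HasDerivAt (fun y : ℝ => c * y) c (x n k) := by
        simpa using (hasDerivAt_id (x n k)).const_mul c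
      have h1 : HasDerivAt (fun y => Real.exp (c * y)) (Real.exp (c * x n k) * c) (x n k) :=
        (Real.hasDerivAt_exp _).comp (x n k) h0
      have h2 : HasDerivAt (fun y => K * c * Real.exp (c * y))
          (K * c * (Real.exp (c * x n k) * c)) (x n k) := h1.const_mul (K * c)
      exact h2.congr_deriv (by ring)
    rw [hval1, hval2, ← hPx]
    ring
  -- Case B : n = N
  set W : Fin N → ℝ := fun i => ∑ σ : Equiv.Perm (Fin N), ((Equiv.Perm.sign σ : ℤ) : ℝ) *
      ((∏ j ∈ Finset.univ.erase i, Ψ (σ j) t (v j)) *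
        (deriv (fun s => Ψ (σ i) s (v i)) t - μ N ^ 2 / 2 * Ψ (σ i) t (v i))) with hW
  have hcase2 : ∀ k (hk1 : 1 ≤ k) (hk2 : k ≤ N),
      (1 / 2) * deriv (deriv (fun u => ptil N μ Ψ t (upd x N k u))) (x N k)
        - μ N * deriv (fun u => ptil N μ Ψ t (upd x N k u)) (x N k)
      = W ⟨k - 1, by omega⟩ * X := by
    intro k hk1 hk2
    set i₀ : Fin N := ⟨k - 1, by omega⟩ with hi₀
    have h5 : i₀.1 = k - 1 := by rw [hi₀]
    have hki : i₀.1 + 1 = k := by omega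
    set cc : Equiv.Perm (Fin N) → ℝ := fun σ => ((Equiv.Perm.sign σ : ℤ) : ℝ) *
        ∏ j ∈ Finset.univ.erase i₀, Ψ (σ j) t (v j) with hcc
    have key : ∀ u, ptil N μ Ψ t (upd x N k u)
        = (∑ σ : Equiv.Perm (Fin N), cc σ * Ψ (σ i₀) t u) * X := by
      intro u
      rw [ptil_eq]
      have hS' : SS μ N (upd x N k u) = SS μ N x := by
        unfold SS
        refine Finset.sum_congr rfl fun m hm => Finset.sum_congr rfl fun j _ => ?_
        obtain ⟨hm1, hm2⟩ := Finset.mem_Icc.mp hm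
        have hmN : m ≠ N := by omega
        congr 1
        show (if m = N ∧ j = k then u else x m j) = x m j
        rw [if_neg]
        rintro ⟨h1, -⟩; exact hmN h1
      have hv' : (fun i : Fin N => upd x N k u N (i.1 + 1)) = Function.update v i₀ u := by
        funext i
        by_cases h : i = i₀
        · subst h
          rw [Function.update_self]
          show (if N = N ∧ i₀.1 + 1 = k then u else x N (i₀.1 + 1)) = u
          rw [if_pos ⟨rfl, hki⟩]
        · have hne : i.1 + 1 ≠ k := by
            intro hcon
            exact h (Fin.ext (by omega))
          show (if N = N ∧ i.1 + 1 = k then u else x N (i.1 + 1)) = Function.update v i₀ u i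
          rw [Function.update_of_ne h, if_neg (fun hc => hne hc.2), hv]
      rw [hS', hv', ← hX]
      congr 1
      show Gd N Ψ t (Function.update v i₀ u) = _
      unfold Gd
      refine Finset.sum_congr rfl fun σ _ => ?_
      rw [← Finset.mul_prod_erase _ _ (Finset.mem_univ i₀)]
      have he : ∀ j ∈ Finset.univ.erase i₀,
          Ψ (σ j) t (Function.update v i₀ u j) = Ψ (σ j) t (v j) :=
        fun j hj => by rw [Function.update_of_ne (Finset.ne_of_mem_erase hj)]
      rw [Finset.prod_congr rfl he, Function.update_self, hcc]
      ring
    have hder1 : deriv (fun u => ptil N μ Ψ t (upd x N k u))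
        = fun u => (∑ σ : Equiv.Perm (Fin N), cc σ * deriv (fun w => Ψ (σ i₀) t w) u) * X := by
      funext u
      have hh : HasDerivAt (fun u' => (∑ σ : Equiv.Perm (Fin N), cc σ * Ψ (σ i₀) t u') * X)
          ((∑ σ : Equiv.Perm (Fin N), cc σ * deriv (fun w => Ψ (σ i₀) t w) u) * X) u :=
        HasDerivAt.mul_const
          (HasDerivAt.fun_sum fun σ _ => ((hdiffu (σ i₀) t u).hasDerivAt).const_mul (cc σ)) X
      have h4 : HasDerivAt (fun u' => ptil N μ Ψ t (upd x N k u'))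
          ((∑ σ : Equiv.Perm (Fin N), cc σ * deriv (fun w => Ψ (σ i₀) t w) u) * X) u := by
        rw [funext key]; exact hh
      exact h4.deriv
    have hval1 : deriv (fun u => ptil N μ Ψ t (upd x N k u)) (x N k)
        = (∑ σ : Equiv.Perm (Fin N), cc σ * deriv (fun w => Ψ (σ i₀) t w) (x N k)) * X := by
      rw [hder1]
    have hval2 : deriv (deriv (fun u => ptil N μ Ψ t (upd x N k u))) (x N k)
        = (∑ σ : Equiv.Perm (Fin N),
            cc σ * deriv (deriv (fun w => Ψ (σ i₀) t w)) (x N k)) * X := by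
      rw [hder1]
      refine HasDerivAt.deriv ?_
      exact HasDerivAt.mul_const
        (HasDerivAt.fun_sum fun σ _ =>
          ((hdiffd1 (σ i₀) t (x N k)).hasDerivAt).const_mul (cc σ)) X
    rw [hval1, hval2]
    have hPDE' : ∀ σ : Equiv.Perm (Fin N),
        (1 / 2) * deriv (deriv (fun w => Ψ (σ i₀) t w)) (x N k)
          - μ N * deriv (fun w => Ψ (σ i₀) t w) (x N k)
        = deriv (fun s => Ψ (σ i₀) s (x N k)) t - μ N ^ 2 / 2 * Ψ (σ i₀) t (x N k) := by
      intro σ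
      have := hPDE (σ i₀) t (x N k)
      linarith
    have hxv : x N k = v i₀ := by
      rw [hv]
      show x N k = x N (i₀.1 + 1)
      rw [hki]
    have e3 : (1 / 2) * ((∑ σ : Equiv.Perm (Fin N),
          cc σ * deriv (deriv (fun w => Ψ (σ i₀) t w)) (x N k)) * X)
        - μ N * ((∑ σ : Equiv.Perm (Fin N), cc σ * deriv (fun w => Ψ (σ i₀) t w) (x N k)) * X)
        = (∑ σ : Equiv.Perm (Fin N), cc σ *
            ((1 / 2) * deriv (deriv (fun w => Ψ (σ i₀) t w)) (x N k)
              - μ N * deriv (fun w => Ψ (σ i₀) t w) (x N k))) * X := by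
      rw [Finset.sum_congr rfl (fun σ _ =>
        (by ring : cc σ * ((1 / 2) * deriv (deriv (fun w => Ψ (σ i₀) t w)) (x N k)
            - μ N * deriv (fun w => Ψ (σ i₀) t w) (x N k))
          = (1 / 2) * (cc σ * deriv (deriv (fun w => Ψ (σ i₀) t w)) (x N k))
            - μ N * (cc σ * deriv (fun w => Ψ (σ i₀) t w) (x N k)))),
        Finset.sum_sub_distrib, ← Finset.mul_sum, ← Finset.mul_sum]
      ring
    rw [e3]
    have e4 : ∑ σ : Equiv.Perm (Fin N), cc σ *
        ((1 / 2) * deriv (deriv (fun w => Ψ (σ i₀) t w)) (x N k)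
          - μ N * deriv (fun w => Ψ (σ i₀) t w) (x N k)) = W i₀ := by
      rw [hW]
      refine Finset.sum_congr rfl fun σ _ => ?_
      rw [hPDE' σ, hxv, hcc]
      ring
    rw [e4]
  -- sum over k for n = N
  have hsumN : ∑ k ∈ Finset.Icc 1 N,
      ((1 / 2) * deriv (deriv (fun u => ptil N μ Ψ t (upd x N k u))) (x N k)
        - μ N * deriv (fun u => ptil N μ Ψ t (upd x N k u)) (x N k))
      = (∑ i : Fin N, W i) * X := by
    set V : ℕ → ℝ := fun m => if h : m < N then W ⟨m, h⟩ else 0 with hV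
    have h1 : ∀ k ∈ Finset.Icc 1 N,
        (1 / 2) * deriv (deriv (fun u => ptil N μ Ψ t (upd x N k u))) (x N k)
          - μ N * deriv (fun u => ptil N μ Ψ t (upd x N k u)) (x N k) = V (k - 1) * X := by
      intro k hk
      obtain ⟨hk1, hk2⟩ := Finset.mem_Icc.mp hk
      rw [hcase2 k hk1 hk2]
      simp only [hV]
      rw [dif_pos (show k - 1 < N from by omega)]
    rw [Finset.sum_congr rfl h1, ← Finset.sum_mul]
    congr 1
    rw [sum_Icc_one_eq_sum_fin N (fun k => V (k - 1))]
    refine Finset.sum_congr rfl fun i _ => ?_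
    simp only [Nat.add_sub_cancel, hV]
    rw [dif_pos i.isLt]
  -- identify ∑ W with dG and the μ_N² term
  have hWsum : ∑ i : Fin N, W i = dG - (N : ℝ) * (μ N ^ 2 / 2) * Gd N Ψ t v := by
    have e5 : ∀ (i : Fin N) (σ : Equiv.Perm (Fin N)),
        Ψ (σ i) t (v i) * ∏ j ∈ Finset.univ.erase i, Ψ (σ j) t (v j)
          = ∏ j, Ψ (σ j) t (v j) :=
      fun i σ => Finset.mul_prod_erase Finset.univ (fun j => Ψ (σ j) t (v j)) (Finset.mem_univ i)
    have e6 : ∑ i : Fin N, W i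
        = (∑ i : Fin N, ∑ σ : Equiv.Perm (Fin N), ((Equiv.Perm.sign σ : ℤ) : ℝ) *
            ((∏ j ∈ Finset.univ.erase i, Ψ (σ j) t (v j)) *
              deriv (fun s => Ψ (σ i) s (v i)) t))
          - ∑ i : Fin N, ∑ σ : Equiv.Perm (Fin N), μ N ^ 2 / 2 *
              (((Equiv.Perm.sign σ : ℤ) : ℝ) * ∏ j, Ψ (σ j) t (v j)) := by
      rw [← Finset.sum_sub_distrib]
      refine Finset.sum_congr rfl fun i _ => ?_
      rw [hW, ← Finset.sum_sub_distrib]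
      refine Finset.sum_congr rfl fun σ _ => ?_
      rw [← e5 i σ]
      ring
    have hA : ∑ i : Fin N, ∑ σ : Equiv.Perm (Fin N), ((Equiv.Perm.sign σ : ℤ) : ℝ) *
        ((∏ j ∈ Finset.univ.erase i, Ψ (σ j) t (v j)) *
          deriv (fun s => Ψ (σ i) s (v i)) t) = dG := by
      rw [hdG, Finset.sum_comm]
      refine Finset.sum_congr rfl fun σ _ => ?_
      rw [Finset.mul_sum]
    have hGdv : ∑ σ : Equiv.Perm (Fin N), ((Equiv.Perm.sign σ : ℤ) : ℝ) *
        ∏ j, Ψ (σ j) t (v j) = Gd N Ψ t v := rfl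
    have hB : ∑ i : Fin N, ∑ σ : Equiv.Perm (Fin N), μ N ^ 2 / 2 *
        (((Equiv.Perm.sign σ : ℤ) : ℝ) * ∏ j, Ψ (σ j) t (v j))
        = (N : ℝ) * (μ N ^ 2 / 2) * Gd N Ψ t v := by
      rw [Finset.sum_congr rfl (fun i (_ : i ∈ Finset.univ) =>
        (Finset.mul_sum Finset.univ (fun σ : Equiv.Perm (Fin N) =>
          ((Equiv.Perm.sign σ : ℤ) : ℝ) * ∏ j, Ψ (σ j) t (v j)) (μ N ^ 2 / 2)).symm)]
      rw [hGdv, Finset.sum_const, Finset.card_univ, Fintype.card_fin, nsmul_eq_mul]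
      ring
    rw [e6, hA, hB]
  -- key algebraic identity
  have hkey : ∑ n ∈ Finset.Icc 1 (N - 1), (n : ℝ) *
      ((1 / 2) * (μ n - μ (n + 1)) ^ 2 - μ n * (μ n - μ (n + 1)))
      = Aexp μ N + (N : ℝ) * (μ N ^ 2 / 2) := by
    have h2' : ∑ n ∈ Finset.Icc 1 (N - 1), (n : ℝ) * (μ (n + 1) ^ 2 - μ n ^ 2)
        = (N : ℝ) * μ N ^ 2 - ∑ k ∈ Finset.Icc 1 N, μ k ^ 2 := by
      simpa using abel_lemma (fun n => μ n ^ 2) N hN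
    have e7 : ∑ n ∈ Finset.Icc 1 (N - 1), (n : ℝ) *
        ((1 / 2) * (μ n - μ (n + 1)) ^ 2 - μ n * (μ n - μ (n + 1)))
        = (1 / 2) * ∑ n ∈ Finset.Icc 1 (N - 1), (n : ℝ) * (μ (n + 1) ^ 2 - μ n ^ 2) := by
      rw [Finset.mul_sum]
      exact Finset.sum_congr rfl fun n _ => by ring
    have e8 : Aexp μ N = -(1 / 2) * ∑ k ∈ Finset.Icc 1 N, μ k ^ 2 := by
      unfold Aexp
      rw [Finset.mul_sum]
      exact Finset.sum_congr rfl fun k _ => by ring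
    rw [e7, e8, h2']
    ring
  -- assemble
  have hsplit : Finset.Icc 1 N = insert N (Finset.Icc 1 (N - 1)) := by
    ext m; simp only [Finset.mem_Icc, Finset.mem_insert]; omega
  have hnotmem : N ∉ Finset.Icc 1 (N - 1) := by
    simp only [Finset.mem_Icc]; omega
  rw [hL, hsplit, Finset.sum_insert hnotmem, hsumN]
  have hrest : ∑ n ∈ Finset.Icc 1 (N - 1), ∑ k ∈ Finset.Icc 1 n,
      ((1 / 2) * deriv (deriv (fun u => ptil N μ Ψ t (upd x n k u))) (x n k)
        - μ n * deriv (fun u => ptil N μ Ψ t (upd x n k u)) (x n k))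
      = ∑ n ∈ Finset.Icc 1 (N - 1), (n : ℝ) *
          (((1 / 2) * (μ n - μ (n + 1)) ^ 2 - μ n * (μ n - μ (n + 1))) * (Gd N Ψ t v * X)) := by
    refine Finset.sum_congr rfl fun n hn => ?_
    rw [Finset.sum_congr rfl (hcase1 n hn), Finset.sum_const, Nat.card_Icc]
    simp only [Nat.add_sub_cancel]
    rw [nsmul_eq_mul]
  rw [hrest, hWsum]
  have hsum_pull : ∑ n ∈ Finset.Icc 1 (N - 1), (n : ℝ) *
      (((1 / 2) * (μ n - μ (n + 1)) ^ 2 - μ n * (μ n - μ (n + 1))) * (Gd N Ψ t v * X))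
      = (∑ n ∈ Finset.Icc 1 (N - 1), (n : ℝ) *
          ((1 / 2) * (μ n - μ (n + 1)) ^ 2 - μ n * (μ n - μ (n + 1)))) * (Gd N Ψ t v * X) := by
    rw [Finset.sum_mul]
    exact Finset.sum_congr rfl fun n _ => by ring
  rw [hsum_pull, hkey]
  ring
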